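/- arXiv:1706.06545 — 2 statements merged into one kernel-verified Lean document; each statement's English description precedes it below -/
import Mathlib

section
/- Let Q be a stably Gelfand quantale and b ∈ Q a projection. Then I_b(Q) is closed under multiplication: if s, t ∈ I_b(Q) then st ∈ I_b(Q); moreover b ∈ I_b(Q), so I_b(Q) is a monoid with unit b. -/
/-!
Closure of `I_b(Q)` under products only uses monotonicity of multiplication. For the unit laws,
`s ∈ I_b(Q)` gives `s s* s ≤ s b ≤ s`, which stable Gelfandness turns into `s s* s = s`; hence
`s = s (s* s) ≤ s b ≤ s` and `s = (s s*) s ≤ b s ≤ s`.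
-/

/-- An involutive quantale: a complete lattice with an associative multiplication
distributing over arbitrary joins in each variable, and a join-preserving
involution that is an anti-automorphism of period 2. -/
class InvQuantale (Q : Type*) extends CompleteLattice Q, Semigroup Q, StarMul Q where
  mul_sSup : ∀ (a : Q) (S : Set Q), a * sSup S = ⨆ s ∈ S, a * s
  sSup_mul : ∀ (S : Set Q) (a : Q), sSup S * a = ⨆ s ∈ S, s * a
  star_sSup : ∀ (S : Set Q), star (sSup S) = ⨆ s ∈ S, star s

/-- The set `I_b(Q)` of partial units relative to `b`. -/
def Ib {Q : Type*} [InvQuantale Q] (b : Q) : Set Q :=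
  {a | star a * a ≤ b ∧ a * star a ≤ b ∧ a * b ≤ a ∧ b * a ≤ a}

/-- `Q` is stably Gelfand if `a a* a ≤ a` implies `a a* a = a`. -/
def IsStablyGelfand (Q : Type*) [InvQuantale Q] : Prop :=
  ∀ a : Q, a * star a * a ≤ a → a * star a * a = a

instance InvQuantale.toIsQuantale {Q : Type*} [InvQuantale Q] : IsQuantale Q :=
  ⟨InvQuantale.mul_sSup, InvQuantale.sSup_mul⟩

namespace Ib

variable {Q : Type*} [InvQuantale Q] {b s t : Q}

theorem mul_mem (hs : s ∈ Ib b) (ht : t ∈ Ib b) : s * t ∈ Ib b := by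
  obtain ⟨hs₁, hs₂, hs₃, hs₄⟩ := hs
  obtain ⟨ht₁, ht₂, ht₃, ht₄⟩ := ht
  refine ⟨?_, ?_, ?_, ?_⟩
  · calc star (s * t) * (s * t) = star t * (star s * s) * t := by
          simp only [star_mul, mul_assoc]
      _ ≤ star t * (b * t) := by rw [mul_assoc]; gcongr
      _ ≤ star t * t := by gcongr
      _ ≤ b := ht₁
  · calc s * t * star (s * t) = s * (t * star t) * star s := by
          simp only [star_mul, mul_assoc]
      _ ≤ s * b * star s := by gcongr
      _ ≤ s * star s := by gcongr
      _ ≤ b := hs₂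
  · calc s * t * b = s * (t * b) := mul_assoc s t b
      _ ≤ s * t := by gcongr
  · calc b * (s * t) = b * s * t := (mul_assoc b s t).symm
      _ ≤ s * t := by gcongr

theorem base_mem (hb : b * b = b) (hb' : star b = b) : b ∈ Ib b :=
  ⟨by rw [hb', hb], by rw [hb', hb], hb.le, hb.le⟩

theorem mul_star_mul_self (h : IsStablyGelfand Q) (hs : s ∈ Ib b) : s * star s * s = s :=
  h s <| calc s * star s * s = s * (star s * s) := mul_assoc _ _ _
    _ ≤ s * b := by gcongr; exact hs.1
    _ ≤ s := hs.2.2.1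

theorem mul_base (h : IsStablyGelfand Q) (hs : s ∈ Ib b) : s * b = s :=
  le_antisymm hs.2.2.1 <| calc s = s * (star s * s) := by rw [← mul_assoc, mul_star_mul_self h hs]
    _ ≤ s * b := by gcongr; exact hs.1

theorem base_mul (h : IsStablyGelfand Q) (hs : s ∈ Ib b) : b * s = s :=
  le_antisymm hs.2.2.2 <| calc s = s * star s * s := (mul_star_mul_self h hs).symm
    _ ≤ b * s := by gcongr; exact hs.2.1

end Ib

theorem Ib_monoid {Q : Type*} [InvQuantale Q]
    (h : IsStablyGelfand Q) (b : Q) (hb : b * b = b) (hb' : star b = b) :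
    (∀ s ∈ Ib b, ∀ t ∈ Ib b, s * t ∈ Ib b) ∧ b ∈ Ib b ∧
      (∀ s ∈ Ib b, s * b = s ∧ b * s = s) :=
  ⟨fun _ hs _ ht => Ib.mul_mem hs ht, Ib.base_mem hb hb',
    fun _ hs => ⟨Ib.mul_base h hs, Ib.base_mul h hs⟩⟩
end

section
/- Let Q be a stably Gelfand quantale and b ∈ Q a projection. Then any two idempotents of I_b(Q) commute: if f, g ∈ I_b(Q) with f·f = f and g·g = g, then fg = gf. -/
namespace InvQuantale

variable {Q : Type*} [InvQuantale Q]

protected theorem mul_sup (a x y : Q) : a * (x ⊔ y) = a * x ⊔ a * y := by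
  simpa only [sSup_pair, iSup_pair] using InvQuantale.mul_sSup a {x, y}

protected theorem sup_mul (x y a : Q) : (x ⊔ y) * a = x * a ⊔ y * a := by
  simpa only [sSup_pair, iSup_pair] using InvQuantale.sSup_mul {x, y} a

protected theorem star_sup (x y : Q) : star (x ⊔ y) = star x ⊔ star y := by
  simpa only [sSup_pair, iSup_pair] using InvQuantale.star_sSup ({x, y} : Set Q)

instance : MulLeftMono Q :=
  ⟨fun a _ _ h => sup_eq_right.1 <| by
    simp only [← InvQuantale.mul_sup, sup_eq_right.2 h]⟩

instance : MulRightMono Q :=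
  ⟨fun a _ _ h => sup_eq_right.1 <| by
    simp only [Function.swap, ← InvQuantale.sup_mul, sup_eq_right.2 h]⟩

protected theorem star_le_star {x y : Q} (h : x ≤ y) : star x ≤ star y :=
  sup_eq_right.1 <| by rw [← InvQuantale.star_sup, sup_eq_right.2 h]

end InvQuantale

section Projections

variable {Q : Type*} [InvQuantale Q] {b f g : Q}

theorem IsStarProjection.le_of_mem_Ib (hf : IsStarProjection f) (hfI : f ∈ Ib b) : f ≤ b := by
  simpa only [hf.isSelfAdjoint.star_eq, hf.isIdempotentElem.eq] using hfI.1

theorem IsStarProjection.mul_mem_Ib (hf : IsStarProjection f) (hg : IsStarProjection g)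
    (hfI : f ∈ Ib b) (hgI : g ∈ Ib b) : f * g ∈ Ib b := by
  have hfs := hf.isSelfAdjoint.star_eq
  have hgs := hg.isSelfAdjoint.star_eq
  refine ⟨?_, ?_, ?_, ?_⟩
  · calc star (f * g) * (f * g) = g * (f * f) * g := by simp only [star_mul, hfs, hgs, mul_assoc]
      _ ≤ g * b * g := by rw [hf.isIdempotentElem.eq]; gcongr; exact hf.le_of_mem_Ib hfI
      _ ≤ g * g := by gcongr; exact hgI.2.2.1
      _ ≤ b := by rw [hg.isIdempotentElem.eq]; exact hg.le_of_mem_Ib hgI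
  · calc f * g * star (f * g) = f * (g * g) * f := by simp only [star_mul, hfs, hgs, mul_assoc]
      _ ≤ f * b * f := by rw [hg.isIdempotentElem.eq]; gcongr; exact hg.le_of_mem_Ib hgI
      _ ≤ f * f := by gcongr; exact hfI.2.2.1
      _ ≤ b := by rw [hf.isIdempotentElem.eq]; exact hf.le_of_mem_Ib hfI
  · rw [mul_assoc]; exact mul_le_mul_right hgI.2.2.1 f
  · rw [← mul_assoc]; exact mul_le_mul_left hfI.2.2.2 g

namespace IsStablyGelfand

theorem mul_star_mul_eq_of_mem_Ib (h : IsStablyGelfand Q) {a : Q} (ha : a ∈ Ib b) :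
    a * star a * a = a :=
  h a <| calc
    a * star a * a = a * (star a * a) := mul_assoc _ _ _
    _ ≤ a * b := mul_le_mul_right ha.1 a
    _ ≤ a := ha.2.2.1

theorem le_of_mem_Ib (h : IsStablyGelfand Q) (hb : IsIdempotentElem b) (hfI : f ∈ Ib b)
    (hf : IsIdempotentElem f) : f ≤ b :=
  calc f = f * star f * f := (h.mul_star_mul_eq_of_mem_Ib hfI).symm
    _ = f * star f * (star f * f) := by
      conv_rhs => rw [← mul_assoc, mul_assoc f, hf.star.eq]
    _ ≤ b * b := mul_le_mul' hfI.2.1 hfI.1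
    _ = b := hb.eq

theorem isStarProjection_of_mem_Ib (h : IsStablyGelfand Q) (hb : IsStarProjection b)
    (hfI : f ∈ Ib b) (hf : IsIdempotentElem f) : IsStarProjection f := by
  have hfb := h.le_of_mem_Ib hb.isIdempotentElem hfI hf
  have hbsf : b * star f ≤ star f := by
    simpa only [star_mul, hb.isSelfAdjoint.star_eq] using InvQuantale.star_le_star hfI.2.2.1
  have hsfb : star f * b ≤ star f := by
    simpa only [star_mul, hb.isSelfAdjoint.star_eq] using InvQuantale.star_le_star hfI.2.2.2
  have hle : f ≤ star f :=
    calc f = f * star f * f := (h.mul_star_mul_eq_of_mem_Ib hfI).symm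
      _ ≤ b * star f * f := by gcongr
      _ ≤ star f * f := by gcongr
      _ ≤ star f * b := by gcongr
      _ ≤ star f := hsfb
  refine ⟨hf, le_antisymm ?_ hle⟩
  simpa only [star_star] using InvQuantale.star_le_star hle

end IsStablyGelfand

end Projections

theorem Ib_idempotents_commute {Q : Type*} [InvQuantale Q]
    (h : IsStablyGelfand Q) (b : Q) (hb : b * b = b) (hb' : star b = b)
    (f g : Q) (hf : f ∈ Ib b) (hg : g ∈ Ib b)
    (hf2 : f * f = f) (hg2 : g * g = g) :
    f * g = g * f := by
  have hbp : IsStarProjection b := ⟨hb, hb'⟩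
  have hfp := h.isStarProjection_of_mem_Ib hbp hf hf2
  have hgp := h.isStarProjection_of_mem_Ib hbp hg hg2
  have hstar : star (f * g) = g * f := by
    rw [star_mul, hfp.isSelfAdjoint.star_eq, hgp.isSelfAdjoint.star_eq]
  have hfgI : f * g ∈ Ib b := hfp.mul_mem_Ib hgp hf hg
  have hfg : IsIdempotentElem (f * g) :=
    calc f * g * (f * g) = f * (g * g) * (f * f) * g := by rw [hf2, hg2]; simp only [mul_assoc]
      _ = f * g * star (f * g) * (f * g) := by rw [hstar]; simp only [mul_assoc]
      _ = f * g := h.mul_star_mul_eq_of_mem_Ib hfgI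
  rw [← hstar, (h.isStarProjection_of_mem_Ib hbp hfgI hfg).isSelfAdjoint.star_eq]
end
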